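/- For every natural number n ≥ 1, the polynomial f_n has only simple zeros in ℂ: f_n is squarefree (equivalently, f_n and f_n' have no common complex root), and hence f_n has exactly n distinct complex roots. -/
import Mathlib

open Polynomial

/-- The polynomial `f_n(z) = ∑_{j=0}^n (binom(n,j))^2 z^j` with complex coefficients. -/
noncomputable def hyperPoly (n : ℕ) : Polynomial ℂ :=
  ∑ j ∈ Finset.range (n + 1), Polynomial.C ((n.choose j : ℂ) ^ 2) * Polynomial.X ^ j

lemma coeff_hyperPoly (n k : ℕ) : (hyperPoly n).coeff k = ((n.choose k : ℂ)) ^ 2 := by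
  simp only [hyperPoly, finset_sum_coeff, coeff_C_mul, coeff_X_pow, mul_ite, mul_one, mul_zero]
  rw [Finset.sum_ite_eq (Finset.range (n + 1)) k]
  by_cases h : k < n + 1
  · simp [h]
  · rw [Nat.choose_eq_zero_of_lt (show n < k by omega)]
    simp [h]

lemma key_choose (n k : ℕ) :
    ((k : ℂ) + 1) ^ 2 * ((n.choose (k + 1) : ℂ)) ^ 2
      = ((n : ℂ) - k) ^ 2 * ((n.choose k : ℂ)) ^ 2 := by
  rcases lt_or_ge k n with h | h
  · have h1 := Nat.choose_succ_right_eq n k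
    have h2 : ((n.choose (k + 1) : ℂ)) * ((k : ℂ) + 1)
        = ((n.choose k : ℂ)) * ((n : ℂ) - k) := by
      have := congrArg (Nat.cast : ℕ → ℂ) h1
      push_cast [Nat.cast_sub h.le] at this
      exact this
    linear_combination (((k : ℂ) + 1) * (n.choose (k + 1) : ℂ)
      + ((n : ℂ) - k) * (n.choose k : ℂ)) * h2
  · rcases eq_or_lt_of_le h with heq | h'
    · subst heq
      rw [Nat.choose_eq_zero_of_lt (Nat.lt_succ_self n)]
      ring
    · rw [Nat.choose_eq_zero_of_lt h', Nat.choose_eq_zero_of_lt (show n < k + 1 by omega)]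
      ring

lemma hyper_ode (n : ℕ) :
    X * (1 - X) * derivative (derivative (hyperPoly n))
      + (1 + C (2 * (n : ℂ) - 1) * X) * derivative (hyperPoly n)
    = C ((n : ℂ) ^ 2) * hyperPoly n := by
  have expand : X * (1 - X) * derivative (derivative (hyperPoly n))
      + (1 + C (2 * (n : ℂ) - 1) * X) * derivative (hyperPoly n)
      = derivative (derivative (hyperPoly n)) * X
        - (derivative (derivative (hyperPoly n)) * X) * X
        + derivative (hyperPoly n)
        + (C (2 * (n : ℂ) - 1) * derivative (hyperPoly n)) * X := by ring
  rw [expand]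
  ext k
  match k with
  | 0 =>
    simp only [coeff_add, coeff_sub, coeff_C_mul, coeff_mul_X_zero, coeff_derivative,
      coeff_hyperPoly]
    norm_num [Nat.choose_one_right]
  | 1 =>
    simp only [coeff_add, coeff_sub, coeff_C_mul, coeff_mul_X, coeff_mul_X_zero,
      coeff_derivative, coeff_hyperPoly]
    have h := key_choose n 1
    norm_num at h ⊢
    linear_combination h
  | (l+2) =>
    simp only [coeff_add, coeff_sub, coeff_C_mul, coeff_mul_X, coeff_mul_X_zero,
      coeff_derivative, coeff_hyperPoly]
    have h := key_choose n (l+2)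
    push_cast at h ⊢
    ring_nf at h ⊢
    linear_combination h

lemma hyper_natDegree (n : ℕ) : (hyperPoly n).natDegree = n := by
  apply le_antisymm
  · rw [natDegree_le_iff_coeff_eq_zero]
    intro m hm
    rw [coeff_hyperPoly, Nat.choose_eq_zero_of_lt hm]
    simp
  · apply le_natDegree_of_ne_zero
    rw [coeff_hyperPoly, Nat.choose_self]
    norm_num

lemma hyper_ne_zero (n : ℕ) : hyperPoly n ≠ 0 := by
  intro h
  have h2 := coeff_hyperPoly n n
  rw [h] at h2
  simp [Nat.choose_self] at h2

lemma hyper_no_common_root (n : ℕ) (hn : 1 ≤ n) :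
    ∀ z : ℂ, (hyperPoly n).eval z = 0 → ((hyperPoly n).derivative).eval z ≠ 0 := by
  intro z hf0 hf1
  have hfne : hyperPoly n ≠ 0 := hyper_ne_zero n
  have hroot : (hyperPoly n).IsRoot z := hf0
  have hroot' : ((hyperPoly n).derivative).IsRoot z := hf1
  have hz0 : z ≠ 0 := by
    rintro rfl
    rw [← coeff_zero_eq_eval_zero, coeff_hyperPoly] at hf0
    simp at hf0
  have hz1 : z ≠ 1 := by
    rintro rfl
    have he : (hyperPoly n).eval 1
        = ((∑ j ∈ Finset.range (n + 1), (n.choose j) ^ 2 : ℕ) : ℂ) := by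
      simp [hyperPoly, eval_finset_sum]
    have hpos : 0 < ∑ j ∈ Finset.range (n + 1), (n.choose j) ^ 2 := by
      apply Finset.sum_pos' (fun i _ => Nat.zero_le _)
      exact ⟨0, by simp, by simp⟩
    rw [he] at hf0
    exact (Nat.cast_ne_zero (R := ℂ)).mpr hpos.ne' hf0
  have hf'ne : (hyperPoly n).derivative ≠ 0 := by
    intro h
    have h0 := natDegree_eq_zero_of_derivative_eq_zero h
    rw [hyper_natDegree] at h0
    omega
  have hf''ne : ((hyperPoly n).derivative).derivative ≠ 0 := by
    intro h
    have h0 := natDegree_eq_zero_of_derivative_eq_zero h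
    have hc := eq_C_of_natDegree_eq_zero h0
    rw [hc] at hf1 hf'ne
    rw [eval_C] at hf1
    rw [hf1] at hf'ne
    simp at hf'ne
  set m := rootMultiplicity z (hyperPoly n) with hm
  have hm1 : 0 < m := (rootMultiplicity_pos hfne).mpr hroot
  have hd1 : rootMultiplicity z ((hyperPoly n).derivative) = m - 1 :=
    derivative_rootMultiplicity_of_root hroot
  have hm2 : 2 ≤ m := by
    have := (rootMultiplicity_pos hf'ne).mpr hroot'
    omega
  have hd2 : rootMultiplicity z (((hyperPoly n).derivative).derivative) = m - 2 := by
    rw [derivative_rootMultiplicity_of_root hroot', hd1]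
    omega
  have hq1 : (X - C z) ^ (m - 1) ∣ C ((n : ℂ) ^ 2) * hyperPoly n :=
    Dvd.dvd.mul_left
      (dvd_trans (pow_dvd_pow _ (Nat.sub_le m 1)) (pow_rootMultiplicity_dvd _ z)) _
  have hq2 : (X - C z) ^ (m - 1)
      ∣ (1 + C (2 * (n : ℂ) - 1) * X) * (hyperPoly n).derivative := by
    apply Dvd.dvd.mul_left
    rw [← hd1]
    exact pow_rootMultiplicity_dvd _ z
  have heq : X * (1 - X) * (((hyperPoly n).derivative).derivative)
      = C ((n : ℂ) ^ 2) * hyperPoly n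
        - (1 + C (2 * (n : ℂ) - 1) * X) * (hyperPoly n).derivative :=
    eq_sub_of_add_eq (hyper_ode n)
  have hq3 : (X - C z) ^ (m - 1)
      ∣ X * (1 - X) * (((hyperPoly n).derivative).derivative) := by
    rw [heq]
    exact dvd_sub hq1 hq2
  have h1X : (1 - X : Polynomial ℂ) ≠ 0 := by
    intro h
    have := congrArg (eval 0) h
    simp at this
  have hne : X * (1 - X) * (((hyperPoly n).derivative).derivative) ≠ 0 :=
    mul_ne_zero (mul_ne_zero X_ne_zero h1X) hf''ne
  have hle : m - 1
      ≤ rootMultiplicity z (X * (1 - X) * (((hyperPoly n).derivative).derivative)) :=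
    (le_rootMultiplicity_iff hne).mpr hq3
  rw [rootMultiplicity_mul hne,
    rootMultiplicity_mul (mul_ne_zero X_ne_zero h1X), hd2,
    rootMultiplicity_eq_zero (by simp [IsRoot, hz0]),
    rootMultiplicity_eq_zero (by simp [IsRoot, sub_ne_zero.mpr (Ne.symm hz1)])] at hle
  omega

/-- For every `n ≥ 1`, `f_n` has only simple zeros: it is squarefree (equivalently,
`f_n` and `f_n'` have no common complex root), and hence `f_n` has exactly `n`
distinct complex roots. -/
theorem stmt_3 (n : ℕ) (hn : 1 ≤ n) :
    Squarefree (hyperPoly n) ∧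
    (∀ z : ℂ, (hyperPoly n).eval z = 0 → ((hyperPoly n).derivative).eval z ≠ 0) ∧
    (hyperPoly n).roots.toFinset.card = n := by
  have hnc := hyper_no_common_root n hn
  have hfne : hyperPoly n ≠ 0 := hyper_ne_zero n
  have hsep : (hyperPoly n).Separable := by
    rw [Polynomial.separable_def]
    rw [← EuclideanDomain.gcd_isUnit_iff]
    by_contra hu
    have hd0 : EuclideanDomain.gcd (hyperPoly n) ((hyperPoly n).derivative) ≠ 0 := by
      intro h
      exact hfne (EuclideanDomain.gcd_eq_zero_iff.mp h).1
    have hdeg : (EuclideanDomain.gcd (hyperPoly n) ((hyperPoly n).derivative)).degree ≠ 0 := by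
      intro h
      exact hu (isUnit_iff_degree_eq_zero.mpr h)
    obtain ⟨z, hz⟩ := Complex.isAlgClosed.exists_root _ hdeg
    have h1 : (hyperPoly n).eval z = 0 :=
      eval_eq_zero_of_dvd_of_eval_eq_zero (EuclideanDomain.gcd_dvd_left _ _) hz
    have h2 : ((hyperPoly n).derivative).eval z = 0 :=
      eval_eq_zero_of_dvd_of_eval_eq_zero (EuclideanDomain.gcd_dvd_right _ _) hz
    exact hnc z h1 h2
  refine ⟨hsep.squarefree, hnc, ?_⟩
  rw [Multiset.toFinset_card_of_nodup (nodup_roots hsep)]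
  rw [splits_iff_card_roots.mp (IsAlgClosed.splits (hyperPoly n)), hyper_natDegree]
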